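/- Let n ≥ 1, m ≥ 0, 𝔞 = (a_0,…,a_n) ∈ A_n(m), and let i ∈ M(𝔞) satisfy a_{i+1} > 0, and additionally a_{i−1} < a_{i+1} in case i ≥ 1. Define 𝔞′ = (a_0,…,a_{i−1}, a_i + 1, a_{i+1} − 1, a_{i+2},…,a_n) (one step of the raising algorithm). Then spr(𝔞′) = spr(𝔞), i ∈ M(𝔞′), and ecd(𝔞′) = ecd(𝔞). -/

import Mathlib

/- Common definitions following K. O'Hara's spread/degree and the signature
   refinement; elements of A_n(m) are lists of naturals of length n+1 and sum m. -/

namespace OHara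

/-- The spread of `a = (a_0, …, a_n)`: the maximum of `a_i + a_{i+1}` over `0 ≤ i ≤ n-1`
(`0` if the list has length ≤ 1). -/
def sprL (a : List ℕ) : ℕ :=
  (Finset.range (a.length - 1)).sup (fun i => a.getD i 0 + a.getD (i + 1) 0)

/-- `M(a)`: the set of left indices of maximal pairs. -/
def Mset (a : List ℕ) : Finset ℕ :=
  (Finset.range (a.length - 1)).filter (fun i => a.getD i 0 + a.getD (i + 1) 0 = sprL a)

/-- The connected component (maximal interval of consecutive integers) of `i` inside `S`. -/
def compF (S : Finset ℕ) (i : ℕ) : Finset ℕ :=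
  S.filter (fun j => Finset.Icc (min i j) (max i j) ⊆ S)

/-- The left endpoints of the maximal intervals of consecutive integers of `S`. -/
def leftEnds (S : Finset ℕ) : Finset ℕ :=
  S.filter (fun i => i = 0 ∨ (i - 1) ∉ S)

/-- O'Hara's degree: the sum over the maximal intervals `D` of `M(a)` of `⌈|D|/2⌉`. -/
def ecdL (a : List ℕ) : ℕ :=
  ∑ i ∈ leftEnds (Mset a), ((compF (Mset a) i).card + 1) / 2

/-- The set of active indices `Act(a) = M(a) ∪ (1 + M(a))`. -/
def ActF (a : List ℕ) : Finset ℕ :=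
  Mset a ∪ (Mset a).image (· + 1)

/-- An index `j` survives in `ω(a)` iff it is not active, or it is the left endpoint `c` of a
maximal interval `D = [c, c+d]` of `M(a)` with `d` odd (i.e. `|D|` even). -/
def survivesB (a : List ℕ) (j : ℕ) : Bool :=
  decide (j ∉ ActF a ∨ (j ∈ leftEnds (Mset a) ∧ Even (compF (Mset a) j).card))

/-- `ω(a)`: the result of removing from `a` the largest possible number of maximal pairs. -/
def omegaL (a : List ℕ) : List ℕ :=
  ((List.range a.length).filter (fun j => survivesB a j)).map (fun j => a.getD j 0)

/-- Fuel-driven recursion computing the signature (the fuel `a.length` in `sigmaL`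
always suffices, since `ω` shortens a list of length ≥ 3 by at least 2). -/
def sigmaAux : ℕ → List ℕ → List ℕ
  | _, [] => []
  | 0, a => [a.sum]
  | fuel + 1, a =>
    if a.length ≤ 2 then [a.sum]
    else List.replicate (ecdL a - 1) 0 ++ [sprL a - sprL (omegaL a)] ++ sigmaAux fuel (omegaL a)

/-- The signature `σ(a)`. -/
def sigmaL (a : List ℕ) : List ℕ := sigmaAux a.length a

/-- `m = Σ_{j=0}^k (j+1)·d_j` determined by a signature `(d_0, …, d_k)`. -/
def mOf (ds : List ℕ) : ℕ := ∑ j ∈ Finset.range ds.length, (j + 1) * ds.getD j 0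

/-- `Q_n(d_0, …, d_k)`: the set of elements of `A_n(m)` of signature `(d_0, …, d_k)`. -/
def Qset (n : ℕ) (ds : List ℕ) : Set (List ℕ) :=
  {a | a.length = n + 1 ∧ a.sum = mOf ds ∧ sigmaL a = ds}

/-- The rank `rk(a) = Σ i·a_i`. -/
def rkL (a : List ℕ) : ℕ := ∑ i ∈ Finset.range a.length, i * a.getD i 0

/-- `b` covers `a` in `A_n(m)`: `b` is obtained from `a` by replacing some consecutive pair
`(a_i, a_{i+1})` by `(a_i - 1, a_{i+1} + 1)`. -/
def coversL (b a : List ℕ) : Prop :=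
  ∃ i, i + 1 < a.length ∧ 0 < a.getD i 0 ∧
    b = (a.set i (a.getD i 0 - 1)).set (i + 1) (a.getD (i + 1) 0 + 1)

/-- Normalization phase of the raising algorithm: starting at index `i ∈ M(a)`, repeatedly
replace `i` by `i - 1` as long as `i ≥ 1` and `a_{i+1} = a_{i-1}`. -/
def rnormIdx (a : List ℕ) : ℕ → ℕ
  | 0 => 0
  | i + 1 => if a.getD (i + 2) 0 = a.getD i 0 then rnormIdx a i else i + 1

/-- One move of the raising algorithm from `(a, i)` with `i ∈ M(a)`: after normalizing the
index, either halt (`none`, at an initial element) or perform one step. -/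
def raiseMove (a : List ℕ) (i : ℕ) : Option (List ℕ × ℕ) :=
  let j := rnormIdx a i
  if a.getD (j + 1) 0 = 0 then none
  else some ((a.set j (a.getD j 0 + 1)).set (j + 1) (a.getD (j + 1) 0 - 1), j)

/-- The list of elements produced by iterating the raising algorithm (including the start). -/
def raiseList : ℕ → List ℕ → ℕ → List (List ℕ)
  | 0, a, _ => [a]
  | fuel + 1, a, i =>
    match raiseMove a i with
    | none => [a]
    | some (a', j) => a :: raiseList fuel a' j

/-- Normalization phase of the lowering algorithm: starting at index `i ∈ M(a)`, repeatedly
replace `i` by `i + 1` as long as `i ≤ n - 2` and `a_i = a_{i+2}` (fuel-driven). -/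
def lnormIdx (a : List ℕ) : ℕ → ℕ → ℕ
  | 0, i => i
  | fuel + 1, i =>
    if i + 2 < a.length ∧ a.getD i 0 = a.getD (i + 2) 0 then lnormIdx a fuel (i + 1) else i

/-- One move of the lowering algorithm from `(a, i)` with `i ∈ M(a)`: after normalizing the
index, either halt (`none`, at a terminal element) or perform one step. -/
def lowerMove (a : List ℕ) (i : ℕ) : Option (List ℕ × ℕ) :=
  let j := lnormIdx a a.length i
  if a.getD j 0 = 0 then none
  else some ((a.set j (a.getD j 0 - 1)).set (j + 1) (a.getD (j + 1) 0 + 1), j)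

/-- The list of elements produced by iterating the lowering algorithm (including the start). -/
def lowerList : ℕ → List ℕ → ℕ → List (List ℕ)
  | 0, a, _ => [a]
  | fuel + 1, a, i =>
    match lowerMove a i with
    | none => [a]
    | some (a', j) => a :: lowerList fuel a' j

/-- The colors of the successive covering relations produced by the lowering algorithm:
a lowering step at index `j` replaces `(a_j, a_{j+1})` by `(a_j - 1, a_{j+1} + 1)` and has
color `j + 1`. -/
def lowerColors : ℕ → List ℕ → ℕ → List ℕ
  | 0, _, _ => []
  | fuel + 1, a, i =>
    match lowerMove a i with
    | none => []
    | some (a', j) => (j + 1) :: lowerColors fuel a' j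

/-- The transversal chain `T_i(a)`: the elements obtained from `a` by the raising algorithm
together with those obtained by the lowering algorithm, both started at index `i ∈ M(a)`.
(The fuels `rk(a)` and `a.length * a.sum` are always sufficient, since each raising move
decreases the rank by 1 and each lowering move increases it by 1, within `[0, n·m]`.) -/
def Tset (a : List ℕ) (i : ℕ) : Set (List ℕ) :=
  {x | x ∈ raiseList (rkL a) a i ∨ x ∈ lowerList (a.length * a.sum) a i}

end OHara

/-! The move changes only the pair sums at `i - 1` (up by one, staying below the spread because
`a_{i-1} < a_{i+1}`) and at `i + 1` (down by one). Hence the spread is unchanged, and `M(a')` arises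
from `M(a)` by deleting `i + 1` and possibly adding `i - 1`, where `i` is the left end of its
interval because `a_{i-1} + a_i < spr(a)`. The degree counts the elements standing at the first,
third, fifth, … place of their intervals; splitting `[i, i + d]` into `{i}` and `[i + 2, i + d]`
keeps this count, and so does appending `i - 1, i` to the interval that ends at `i - 2`. -/

namespace OHara

open Finset

/-- `j ∈ S` occupies the first, third, fifth, … place of its maximal run of consecutive
elements of `S`. -/
def oddInRun (S : Finset ℕ) : ℕ → Bool
  | 0 => decide (0 ∈ S)
  | j + 1 => decide (j + 1 ∈ S) && !oddInRun S j

section Runs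

variable {S T : Finset ℕ} {i j l : ℕ}

lemma mem_of_oddInRun (h : oddInRun S j) : j ∈ S := by
  cases j <;> simp_all [oddInRun]

lemma oddInRun_eq_false (h : j ∉ S) : oddInRun S j = false := by
  cases j <;> simp_all [oddInRun]

lemma oddInRun_congr {j₀ : ℕ} (h₀ : oddInRun S j₀ = oddInRun T j₀) (hj : j₀ ≤ j)
    (hST : ∀ x, j₀ < x → x ≤ j → (x ∈ S ↔ x ∈ T)) : oddInRun S j = oddInRun T j := by
  induction j, hj using Nat.le_induction with
  | base => exact h₀
  | succ j hj ih =>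
    simp only [oddInRun, hST (j + 1) (by omega) le_rfl,
      ih fun x hx hxj => hST x hx (by omega)]

lemma oddInRun_congr_of_le (hST : ∀ x ≤ j, (x ∈ S ↔ x ∈ T)) :
    oddInRun S j = oddInRun T j :=
  oddInRun_congr (by simp [oddInRun, hST 0 (Nat.zero_le j)]) (Nat.zero_le j)
    fun x _ hx => hST x hx

lemma oddInRun_of_mem_leftEnds (hl : l ∈ leftEnds S) : oddInRun S l := by
  obtain ⟨hlS, hl⟩ := mem_filter.1 hl
  cases l with
  | zero => simpa [oddInRun] using hlS
  | succ l => simp [oddInRun, hlS, oddInRun_eq_false (by simpa using hl)]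

lemma mem_compF_of_mem_leftEnds (hl : l ∈ leftEnds S) :
    j ∈ compF S l ↔ l ≤ j ∧ Icc l j ⊆ S := by
  obtain ⟨hlS, hl⟩ := mem_filter.1 hl
  simp only [compF, mem_filter]
  constructor
  · rintro ⟨-, hsub⟩
    have hlj : l ≤ j := by
      by_contra! hjl
      have : l - 1 ∈ S := hsub (by simp; omega)
      rcases hl with h | h <;> [omega; exact h this]
    simpa [min_eq_left hlj, max_eq_right hlj, hlj] using hsub
  · rintro ⟨hlj, hsub⟩
    exact ⟨hsub (by simp [hlj]), by simpa [min_eq_left hlj, max_eq_right hlj] using hsub⟩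

lemma exists_mem_leftEnds_mem_compF (hj : j ∈ S) : ∃ l ∈ leftEnds S, j ∈ compF S l := by
  induction j with
  | zero => exact ⟨0, by simp [leftEnds, hj], by simp [compF, hj]⟩
  | succ j ih =>
    by_cases hjS : j ∈ S
    · obtain ⟨l, hl, hjl⟩ := ih hjS
      obtain ⟨hlj, hsub⟩ := (mem_compF_of_mem_leftEnds hl).1 hjl
      refine ⟨l, hl, (mem_compF_of_mem_leftEnds hl).2 ⟨by omega, fun x hx => ?_⟩⟩
      rcases (show x ≤ j ∨ x = j + 1 by simp at hx; omega) with hx' | rfl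
      · exact hsub (by simp at hx ⊢; omega)
      · exact hj
    · have hl : j + 1 ∈ leftEnds S := by simp [leftEnds, hj, hjS]
      exact ⟨j + 1, hl, (mem_compF_of_mem_leftEnds hl).2 ⟨le_rfl, by simpa using hj⟩⟩

lemma le_of_mem_compF (hl : l ∈ leftEnds S) (hi : i ∈ leftEnds S) (hjl : j ∈ compF S l)
    (hji : j ∈ compF S i) : i ≤ l := by
  obtain ⟨hlj, hsub⟩ := (mem_compF_of_mem_leftEnds hl).1 hjl
  obtain ⟨hij, -⟩ := (mem_compF_of_mem_leftEnds hi).1 hji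
  by_contra! hli
  have : i - 1 ∈ S := hsub (by simp; omega)
  rcases (mem_filter.1 hi).2 with h | h <;> [omega; exact h this]

lemma exists_compF_eq_Icc (hl : l ∈ leftEnds S) : ∃ r, compF S l = Icc l r := by
  have hmem (j : ℕ) := mem_compF_of_mem_leftEnds (j := j) hl
  have hne : (compF S l).Nonempty :=
    ⟨l, (hmem l).2 ⟨le_rfl, by simpa using (mem_filter.1 hl).1⟩⟩
  have hr := (hmem _).1 ((compF S l).max'_mem hne)
  refine ⟨(compF S l).max' hne, ?_⟩
  ext j
  rw [hmem, mem_Icc]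
  exact ⟨fun h => ⟨h.1, le_max' _ _ ((hmem j).2 h)⟩,
    fun h => ⟨h.1, (Icc_subset_Icc_right h.2).trans hr.2⟩⟩

lemma oddInRun_iff_even_sub (hl : l ∈ leftEnds S) (hj : j ∈ compF S l) :
    oddInRun S j ↔ Even (j - l) := by
  obtain ⟨hlj, hsub⟩ := (mem_compF_of_mem_leftEnds hl).1 hj
  clear hj
  induction j, hlj using Nat.le_induction with
  | base => simp [oddInRun_of_mem_leftEnds hl]
  | succ j hlj ih =>
    have hjS : j + 1 ∈ S := hsub (by simp; omega)
    rw [show j + 1 - l = j - l + 1 by omega, Nat.even_add_one,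
      ← ih ((Icc_subset_Icc_right (by omega)).trans hsub)]
    simp [oddInRun, hjS]

lemma card_filter_even_sub_Icc (l r : ℕ) :
    #{j ∈ Icc l r | Even (j - l)} = (#(Icc l r) + 1) / 2 := by
  induction r with
  | zero => rcases l with _ | l <;> simp [filter_singleton]
  | succ r ih =>
    rcases le_or_gt l (r + 1) with h | h
    · rw [Nat.card_Icc] at ih
      rw [← insert_Icc_right_eq_Icc_add_one h, card_insert_of_notMem (by simp), Nat.card_Icc,
        filter_insert]
      by_cases he : Even (r + 1 - l)
      · rw [if_pos he, card_insert_of_notMem (by simp), ih]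
        have := Nat.even_iff.1 he
        omega
      · rw [if_neg he, ih]
        have := Nat.even_iff.not.1 he
        omega
    · simp [Icc_eq_empty_of_lt h]

lemma card_filter_oddInRun_compF (hl : l ∈ leftEnds S) :
    #{j ∈ compF S l | oddInRun S j} = (#(compF S l) + 1) / 2 := by
  rw [filter_congr fun j hj => oddInRun_iff_even_sub hl hj]
  obtain ⟨r, hr⟩ := exists_compF_eq_Icc hl
  rw [hr, card_filter_even_sub_Icc]

end Runs

def ecdF (S : Finset ℕ) : ℕ := ∑ l ∈ leftEnds S, (#(compF S l) + 1) / 2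

lemma ecdF_eq_card_filter_oddInRun {S U : Finset ℕ} (hSU : S ⊆ U) :
    ecdF S = #{j ∈ U | oddInRun S j} := by
  have hdisj : (leftEnds S : Set ℕ).PairwiseDisjoint fun l => {j ∈ compF S l | oddInRun S j} :=
    fun l hl i hi hne => disjoint_left.2 fun j hjl hji =>
      hne (le_antisymm (le_of_mem_compF hi hl (mem_filter.1 hji).1 (mem_filter.1 hjl).1)
        (le_of_mem_compF hl hi (mem_filter.1 hjl).1 (mem_filter.1 hji).1))
  have hU : {j ∈ U | oddInRun S j} =
      (leftEnds S).biUnion fun l => {j ∈ compF S l | oddInRun S j} := by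
    ext j
    simp only [mem_filter, mem_biUnion]
    constructor
    · rintro ⟨-, hj⟩
      obtain ⟨l, hl, hjl⟩ := exists_mem_leftEnds_mem_compF (mem_of_oddInRun hj)
      exact ⟨l, hl, hjl, hj⟩
    · rintro ⟨l, -, hjl, hj⟩
      exact ⟨hSU (mem_filter.1 hjl).1, hj⟩
  rw [hU, card_biUnion hdisj]
  exact sum_congr rfl fun l hl => (card_filter_oddInRun_compF hl).symm

section Moves

variable {S : Finset ℕ} {i k : ℕ}

lemma oddInRun_erase_succ (hi : i ∈ leftEnds S) (j : ℕ) :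
    oddInRun (S.erase (i + 1)) j = oddInRun S j := by
  rcases le_or_gt j i with hj | hj
  · exact oddInRun_congr_of_le fun x hx => by simp [show x ≠ i + 1 by omega]
  · refine oddInRun_congr ?_ (show i + 1 ≤ j by omega) fun x hx _ => by
      simp [show x ≠ i + 1 by omega]
    simp [oddInRun, oddInRun_of_mem_leftEnds hi]

lemma ecdF_erase_succ (hi : i ∈ leftEnds S) : ecdF (S.erase (i + 1)) = ecdF S := by
  rw [ecdF_eq_card_filter_oddInRun (erase_subset _ S), ecdF_eq_card_filter_oddInRun subset_rfl]
  simp only [oddInRun_erase_succ hi]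

lemma ecdF_insert (hk : k ∉ S) (hk₁ : k + 1 ∈ S) (hk₂ : k + 2 ∉ S) :
    ecdF (insert k S) = ecdF S := by
  have hout (j : ℕ) (hj : j ≠ k) (hj₁ : j ≠ k + 1) : oddInRun (insert k S) j = oddInRun S j := by
    rcases lt_or_gt_of_ne hj with hj | hj
    · exact oddInRun_congr_of_le fun x hx => by simp [show x ≠ k by omega]
    · refine oddInRun_congr ?_ (show k + 2 ≤ j by omega) fun x hx _ => by
        simp [show x ≠ k by omega]
      rw [oddInRun_eq_false hk₂, oddInRun_eq_false (by simp [hk₂])]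
  have hsucc : oddInRun (insert k S) (k + 1) = !oddInRun (insert k S) k := by
    simp [oddInRun, hk₁]
  have hS : oddInRun S k = false ∧ oddInRun S (k + 1) = true := by
    simp [oddInRun, oddInRun_eq_false hk, hk₁]
  have hpair : {k, k + 1} ⊆ insert k S := by simp [insert_subset_iff, hk₁]
  rw [ecdF_eq_card_filter_oddInRun subset_rfl, ecdF_eq_card_filter_oddInRun (subset_insert k S),
    card_filter, card_filter, ← sum_sdiff hpair, ← sum_sdiff hpair, sum_pair (by omega),
    sum_pair (by omega), hsucc, hS.1, hS.2]
  congr 1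
  · refine sum_congr rfl fun j hj => ?_
    simp only [mem_sdiff, mem_insert, mem_singleton, not_or] at hj
    rw [hout j hj.2.1 hj.2.2]
  · cases oddInRun (insert k S) k <;> rfl

lemma ecdF_eq_of_forall_mem_iff {T : Finset ℕ} (hi : i ∈ leftEnds S)
    (hT : ∀ j, j + 1 ≠ i → (j ∈ T ↔ j ∈ S ∧ j ≠ i + 1)) : ecdF T = ecdF S := by
  obtain ⟨hiS, hi₀⟩ := mem_filter.1 hi
  have hpred (k : ℕ) (hk : k + 1 = i) : k ∉ S := by
    rcases hi₀ with h | h <;> [omega; exact fun hkS => h (by simpa [← hk] using hkS)]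
  rw [← ecdF_erase_succ hi]
  by_cases hkT : ∃ k, k + 1 = i ∧ k ∈ T
  · obtain ⟨k, rfl, hkT⟩ := hkT
    have hTk : T = insert k (S.erase (k + 1 + 1)) := by
      ext j
      by_cases hj : j = k
      · simp [hj, hkT]
      · simp [hT j (by omega), hj, and_comm]
    rw [hTk, ecdF_insert (by simp [hpred k rfl]) (by simp [hiS]) (by simp)]
  · push Not at hkT
    congr 1
    ext j
    by_cases hj : j + 1 = i
    · simp [hkT j hj, hpred j hj]
    · simp [hT j hj, and_comm]

end Moves

def pairSum (a : List ℕ) (j : ℕ) : ℕ := a.getD j 0 + a.getD (j + 1) 0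

def raiseStep (a : List ℕ) (i : ℕ) : List ℕ :=
  (a.set i (a.getD i 0 + 1)).set (i + 1) (a.getD (i + 1) 0 - 1)

section Lists

variable {a : List ℕ} {i j : ℕ}

lemma le_sprL (hj : j + 1 < a.length) : pairSum a j ≤ sprL a :=
  le_sup (f := pairSum a) (mem_range.2 (by omega))

lemma sprL_le {K : ℕ} (h : ∀ j, j + 1 < a.length → pairSum a j ≤ K) : sprL a ≤ K :=
  Finset.sup_le fun j hj => h j (by simp at hj; omega)

lemma mem_Mset : j ∈ Mset a ↔ j + 1 < a.length ∧ pairSum a j = sprL a := by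
  simp only [Mset, mem_filter, mem_range, pairSum]
  omega

lemma length_raiseStep : (raiseStep a i).length = a.length := by
  simp [raiseStep]

lemma getD_raiseStep (h : i + 1 < a.length) (j : ℕ) :
    (raiseStep a i).getD j 0 =
      if j = i then a.getD i 0 + 1 else if j = i + 1 then a.getD (i + 1) 0 - 1 else a.getD j 0 := by
  simp only [raiseStep, List.getD_eq_getElem?_getD, List.getElem?_set, List.length_set]
  split_ifs <;> grind

lemma pairSum_raiseStep (h : i + 1 < a.length) (hpos : 0 < a.getD (i + 1) 0) (j : ℕ) :
    pairSum (raiseStep a i) j =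
      if j + 1 = i then pairSum a j + 1
      else if j = i + 1 then pairSum a j - 1 else pairSum a j := by
  simp only [pairSum, getD_raiseStep h]
  split_ifs <;> subst_vars <;> omega

lemma pairSum_lt_sprL_of_succ_eq (hi : i ∈ Mset a)
    (hlt : 1 ≤ i → a.getD (i - 1) 0 < a.getD (i + 1) 0) (hj : j + 1 = i) :
    pairSum a j < sprL a := by
  obtain ⟨-, hspr⟩ := mem_Mset.1 hi
  subst hj
  have := hlt (by omega)
  simp only [Nat.add_sub_cancel, pairSum] at this hspr ⊢
  omega

lemma mem_leftEnds_Mset (hi : i ∈ Mset a) (hlt : 1 ≤ i → a.getD (i - 1) 0 < a.getD (i + 1) 0) :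
    i ∈ leftEnds (Mset a) := by
  refine mem_filter.2 ⟨hi, ?_⟩
  rcases i with _ | k
  · exact Or.inl rfl
  · refine Or.inr fun hk => ?_
    rw [Nat.add_sub_cancel] at hk
    exact (pairSum_lt_sprL_of_succ_eq hi hlt rfl).ne (mem_Mset.1 hk).2

lemma sprL_raiseStep (hi : i ∈ Mset a) (hpos : 0 < a.getD (i + 1) 0)
    (hlt : 1 ≤ i → a.getD (i - 1) 0 < a.getD (i + 1) 0) :
    sprL (raiseStep a i) = sprL a := by
  obtain ⟨hlen, hspr⟩ := mem_Mset.1 hi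
  refine le_antisymm (sprL_le fun j hj => ?_) ?_
  · rw [length_raiseStep] at hj
    have := le_sprL hj
    have := pairSum_lt_sprL_of_succ_eq hi hlt (j := j)
    rw [pairSum_raiseStep hlen hpos]
    split_ifs <;> omega
  · have := le_sprL (a := raiseStep a i) (j := i) (by rwa [length_raiseStep])
    rwa [pairSum_raiseStep hlen hpos, if_neg (by omega), if_neg (by omega), hspr] at this

lemma mem_Mset_raiseStep_iff (hi : i ∈ Mset a) (hpos : 0 < a.getD (i + 1) 0)
    (hlt : 1 ≤ i → a.getD (i - 1) 0 < a.getD (i + 1) 0) (hj : j + 1 ≠ i) :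
    j ∈ Mset (raiseStep a i) ↔ j ∈ Mset a ∧ j ≠ i + 1 := by
  have hlen := (mem_Mset.1 hi).1
  rw [mem_Mset, mem_Mset, length_raiseStep, sprL_raiseStep hi hpos hlt,
    pairSum_raiseStep hlen hpos, if_neg hj]
  split_ifs with h
  · subst h
    have : 0 < pairSum a (i + 1) := by unfold pairSum; omega
    have := le_sprL (a := a) (j := i + 1)
    omega
  · exact (and_iff_left h).symm

end Lists

end OHara

open OHara in
theorem raising_step_preserves_spr_ecd_general (a : List ℕ) (i : ℕ) (hi : i ∈ Mset a) (hpos : 0 < a.getD (i + 1) 0)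
    (hlt : 1 ≤ i → a.getD (i - 1) 0 < a.getD (i + 1) 0)
    (a' : List ℕ)
    (ha' : a' = (a.set i (a.getD i 0 + 1)).set (i + 1) (a.getD (i + 1) 0 - 1)) :
    sprL a' = sprL a ∧ i ∈ Mset a' ∧ ecdL a' = ecdL a := by
  have hM (j : ℕ) (hj : j + 1 ≠ i) : j ∈ Mset a' ↔ j ∈ Mset a ∧ j ≠ i + 1 :=
    ha' ▸ mem_Mset_raiseStep_iff hi hpos hlt hj
  exact ⟨ha' ▸ sprL_raiseStep hi hpos hlt, (hM i (by omega)).2 ⟨hi, by omega⟩,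
    (ecdF_eq_of_forall_mem_iff (mem_leftEnds_Mset hi hlt) hM : ecdF (Mset a') = ecdF (Mset a))⟩

open OHara in
/-- One step of the raising algorithm preserves the spread, keeps `i` a maximal-pair index,
and preserves the degree. -/
theorem raising_step_preserves_spr_ecd (n m : ℕ) (hn : 1 ≤ n)
    (a : List ℕ) (hlen : a.length = n + 1) (hsum : a.sum = m)
    (i : ℕ) (hi : i ∈ Mset a) (hpos : 0 < a.getD (i + 1) 0)
    (hlt : 1 ≤ i → a.getD (i - 1) 0 < a.getD (i + 1) 0)
    (a' : List ℕ)
    (ha' : a' = (a.set i (a.getD i 0 + 1)).set (i + 1) (a.getD (i + 1) 0 - 1)) :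
    sprL a' = sprL a ∧ i ∈ Mset a' ∧ ecdL a' = ecdL a :=
  raising_step_preserves_spr_ecd_general a i hi hpos hlt a' ha'
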